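/- (Sum rule under epigraph additivity) Let X be a nonempty set and 𝓛 a space of abstract linear functions on X equipped with the subspace topology of pointwise convergence, and let f₁, …, f_m : X → ℝ ∪ {+∞} (m ≥ 2) with ⋂_{i=1}^m dom f_i ≠ ∅. Assume cl( Σ_{i=1}^m epi f_i* ) = epi (Σ_{i=1}^m f_i)*, where the closure is taken in 𝓛 × ℝ with the product of the pointwise convergence topology on 𝓛 and the standard topology on ℝ, and the sum of epigraphs is the Minkowski sum. Then for every x ∈ ⋂_{i=1}^m dom f_i and every ε ≥ 0, ∂_ε(Σ_{i=1}^m f_i)(x) = ⋂_{η>0} cl( ⋃ { Σ_{i=1}^m ∂_{ε_i} f_i(x) : ε_i ≥ 0, Σ_{i=1}^m ε_i = ε + η } ). -/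

import Mathlib

open Set
open scoped Pointwise

variable {X : Type*}

/-- A space of abstract linear functions on `X`: a nonempty family of real-valued
functions closed under addition, each of whose members admits additive decompositions
of every length `m ≥ 1` inside the family. -/
def IsLinSpace (L : Set (X → ℝ)) : Prop :=
  L.Nonempty ∧
    (∀ l₁ ∈ L, ∀ l₂ ∈ L, l₁ + l₂ ∈ L) ∧
    (∀ l ∈ L, ∀ m : ℕ, 1 ≤ m →
      ∃ g : Fin m → (X → ℝ), (∀ i, g i ∈ L) ∧ l = ∑ i, g i)

/-- Fenchel conjugate of `f : X → ℝ ∪ {+∞}`: `f*(l) = sup_x (l x - f x)`. -/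
noncomputable def fconj (f : X → EReal) (l : X → ℝ) : EReal :=
  ⨆ x : X, ((l x : EReal) - f x)

/-- Abstract biconjugate `f**(x) = sup_{l ∈ L} (l x - f*(l))`. -/
noncomputable def biconj (L : Set (X → ℝ)) (f : X → EReal) (x : X) : EReal :=
  ⨆ l ∈ L, ((l x : EReal) - fconj f l)

/-- ε-subdifferential of `f` at `x` (empty whenever `x ∉ dom f`, i.e. `f x = ⊤`):
`l ∈ ∂_ε f(x)` iff `l ∈ L`, `f x < ⊤` and `f y - f x - (l y - l x) + ε ≥ 0` for all `y`. -/
def subdiff (L : Set (X → ℝ)) (f : X → EReal) (ε : ℝ) (x : X) : Set (X → ℝ) :=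
  {l | l ∈ L ∧ f x < ⊤ ∧ ∀ y, f x + ((l y - l x : ℝ) : EReal) ≤ f y + (ε : EReal)}

/-- Minkowski sum of finitely many subsets of an additive commutative monoid. -/
def minkSum {α : Type*} [AddCommMonoid α] {m : ℕ} (S : Fin m → Set α) : Set α :=
  {a | ∃ g : Fin m → α, (∀ i, g i ∈ S i) ∧ a = ∑ i, g i}

/-- Infimal convolution (over `L`) of finitely many functions,
with the infimum over the empty set equal to `+∞`. -/
noncomputable def infConv (L : Set (X → ℝ)) {m : ℕ}
    (φ : Fin m → (X → ℝ) → EReal) (l : X → ℝ) : EReal :=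
  ⨅ (g : Fin m → (X → ℝ)) (_ : ∀ i, g i ∈ L) (_ : ∑ i, g i = l), ∑ i, φ i (g i)

/-- The space of abstract affine functions generated by `L`: vertical shifts of members of `L`. -/
def Hspace (L : Set (X → ℝ)) : Set (X → ℝ) :=
  {h | ∃ l ∈ L, ∃ c : ℝ, h = fun x => l x + c}

/-- Support set of `f` inside a family `H` of functions: all members of `H` minorizing `f`. -/
def suppIn (H : Set (X → ℝ)) (f : X → EReal) : Set (X → ℝ) :=
  {h | h ∈ H ∧ ∀ x, (h x : EReal) ≤ f x}

/-- `f` is abstract convex w.r.t. the family `H`: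
`f` is the upper envelope of a nonempty subfamily of `H`. -/
def ConvexIn (H : Set (X → ℝ)) (f : X → EReal) : Prop :=
  ∃ S : Set (X → ℝ), S.Nonempty ∧ S ⊆ H ∧ ∀ x, f x = ⨆ h ∈ S, (h x : EReal)

/-- Abstract convexity of a subset `C` of the family `L` (separation property):
every `l₀ ∈ L \ C` is strictly separated from `C` at some point of `X`. -/
def ConvexSetIn (L : Set (X → ℝ)) (C : Set (X → ℝ)) : Prop :=
  C ⊆ L ∧ ∀ l₀ ∈ L, l₀ ∉ C → ∃ x, (⨆ l ∈ C, (l x : EReal)) < (l₀ x : EReal)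

/-- Epigraph of the conjugate of `f`, as a subset of `𝓛 × ℝ`. -/
def epiConj (L : Set (X → ℝ)) (f : X → EReal) : Set ((X → ℝ) × ℝ) :=
  {p | p.1 ∈ L ∧ fconj f p.1 ≤ (p.2 : EReal)}

/-! With `c = Σ fᵢ(x)`, an `ε`-subgradient `l` of a function `g` at `x` is exactly a point
`(l, l x - g x + ε)` of `epi g*`, so `⋃ {Σ ∂_{eᵢ} fᵢ(x) : eᵢ ≥ 0, Σ eᵢ = s}` is the set of `l`
with `(l, l x - c + s)` in `S = Σ epi fᵢ*`, while by hypothesis `∂_ε (Σ fᵢ)(x)` is the set of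
`l ∈ 𝓛` with `(l, l x - c + ε)` in `cl S`. Since `S` is upward closed in its real coordinate,
a point `(l, ψ l)` on the graph of a continuous `ψ` lies in `cl S` iff for every `η > 0`, `l` is a
limit of points `l'` with `(l', ψ l' + η) ∈ S`. -/

namespace EReal

lemma coe_finset_sum {ι : Type*} (s : Finset ι) (a : ι → ℝ) :
    ((∑ i ∈ s, a i : ℝ) : EReal) = ∑ i ∈ s, (a i : EReal) :=
  map_sum (⟨⟨Real.toEReal, coe_zero⟩, coe_add⟩ : ℝ →+ EReal) a s

lemma coe_add_coe_le_add_coe_iff_coe_sub_le (a d e u : ℝ) (t : EReal) :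
    (a : EReal) + d ≤ t + e ↔ (u : EReal) - t ≤ ((u - d - a + e : ℝ) : EReal) := by
  induction t using EReal.rec with
  | bot => simpa using EReal.coe_ne_top (u - d - a + e)
  | top => simp
  | coe t =>
    norm_cast
    constructor <;> intro h <;> linarith

end EReal

section Subdifferential

variable {L : Set (X → ℝ)}

lemma mem_subdiff_iff_mem_epiConj {f : X → EReal} {x : X} {a : ℝ} (ha : f x = a)
    {l : X → ℝ} {ε : ℝ} :
    l ∈ subdiff L f ε x ↔ (l, l x - a + ε) ∈ epiConj L f := by
  simp only [subdiff, epiConj, fconj, mem_ofPred_eq, ha, EReal.coe_lt_top, true_and, iSup_le_iff]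
  refine and_congr_right fun _ => forall_congr' fun y => ?_
  rw [EReal.coe_add_coe_le_add_coe_iff_coe_sub_le _ _ _ (l y)]
  ring_nf

lemma sub_le_of_mem_epiConj {f : X → EReal} {x : X} {a : ℝ} (ha : f x = a)
    {l : X → ℝ} {r : ℝ} (h : (l, r) ∈ epiConj L f) : l x - a ≤ r := by
  have := (le_iSup (fun y => (l y : EReal) - f y) x).trans h.2
  rw [ha] at this
  exact_mod_cast this

lemma mk_mem_epiConj_of_le {f : X → EReal} {l : X → ℝ} {r r' : ℝ} (h : (l, r) ∈ epiConj L f)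
    (hr : r ≤ r') : (l, r') ∈ epiConj L f :=
  ⟨h.1, h.2.trans (EReal.coe_le_coe_iff.2 hr)⟩

end Subdifferential

section MinkowskiSum

variable {α : Type*} [AddCommMonoid α] {m : ℕ}

lemma add_mem_minkSum {S : Fin m → Set α} {a b : α} (ha : a ∈ minkSum S) (i : Fin m)
    (hb : ∀ c ∈ S i, c + b ∈ S i) : a + b ∈ minkSum S := by
  classical
  obtain ⟨g, hg, rfl⟩ := ha
  refine ⟨g + Pi.single i b, fun j => ?_, ?_⟩
  · by_cases hj : j = i
    · subst hj; simpa using hb _ (hg j)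
    · simpa [hj] using hg j
  · simp [Finset.sum_add_distrib]

end MinkowskiSum

section Closure

variable {E : Type*} [TopologicalSpace E]

open Filter Topology in
lemma mk_mem_closure_iff_forall_pos_mem_closure {S : Set (E × ℝ)}
    (hS : ∀ l r r', (l, r) ∈ S → r ≤ r' → (l, r') ∈ S) {ψ : E → ℝ} (hψ : Continuous ψ) (l : E) :
    (l, ψ l) ∈ closure S ↔ ∀ η > 0, l ∈ closure {l' | (l', ψ l' + η) ∈ S} := by
  constructor
  · intro h η hη
    have hV : IsOpen {p : E × ℝ | p.2 < ψ p.1 + η} :=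
      isOpen_lt continuous_snd ((hψ.comp continuous_fst).add continuous_const)
    have hmem : (l, ψ l) ∈ closure ({p : E × ℝ | p.2 < ψ p.1 + η} ∩ S) :=
      hV.inter_closure ⟨by simpa using hη, h⟩
    exact map_mem_closure continuous_fst hmem fun p hp => hS _ _ _ hp.2 hp.1.le
  · intro h
    have hη : ∀ η > 0, (l, ψ l + η) ∈ closure S := fun η hη =>
      map_mem_closure (f := fun l' => (l', ψ l' + η)) (by fun_prop) (h η hη) fun _ hl' => hl'
    have hlim : Tendsto (fun η : ℝ => (l, ψ l + η)) (𝓝[>] 0) (𝓝 (l, ψ l)) := by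
      have : Continuous fun η : ℝ => (l, ψ l + η) := by fun_prop
      simpa using (this.tendsto 0).mono_left nhdsWithin_le_nhds
    exact isClosed_closure.mem_of_tendsto hlim (eventually_nhdsWithin_of_forall hη)

end Closure

section SumRule

variable {L : Set (X → ℝ)} {m : ℕ} {f : Fin m → X → EReal}

lemma iUnion_minkSum_subdiff_eq {x : X} {a : Fin m → ℝ} (ha : ∀ i, f i x = a i) (s : ℝ) :
    (⋃ (e : Fin m → ℝ) (_ : ∀ i, 0 ≤ e i) (_ : ∑ i, e i = s),
        minkSum fun i => subdiff L (f i) (e i) x) =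
      {l | (l, l x - ∑ i, a i + s) ∈ minkSum fun i => epiConj L (f i)} := by
  ext l
  simp only [mem_iUnion, mem_ofPred_eq, exists_prop]
  constructor
  · rintro ⟨e, -, rfl, g, hg, rfl⟩
    refine ⟨fun i => (g i, g i x - a i + e i),
      fun i => (mem_subdiff_iff_mem_epiConj (ha i)).1 (hg i), ?_⟩
    ext
    · simp [Prod.fst_sum]
    · simp [Prod.snd_sum, Finset.sum_apply, Finset.sum_add_distrib, Finset.sum_sub_distrib]
  · rintro ⟨q, hq, hsum⟩
    have hfst := congrArg Prod.fst hsum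
    have hsnd := congrArg Prod.snd hsum
    simp only [Prod.fst_sum, Prod.snd_sum] at hfst hsnd
    refine ⟨fun i => (q i).2 - (q i).1 x + a i,
      fun i => by linarith [sub_le_of_mem_epiConj (ha i) (hq i)], ?_, fun i => (q i).1,
      fun i => (mem_subdiff_iff_mem_epiConj (ha i)).2 (by simpa using hq i), hfst⟩
    simp only [Finset.sum_add_distrib, Finset.sum_sub_distrib, ← hsnd, ← Finset.sum_apply, ← hfst]
    ring

lemma mk_mem_minkSum_epiConj_of_le (hm : 0 < m) {l : X → ℝ} {r r' : ℝ}
    (h : (l, r) ∈ minkSum fun i => epiConj L (f i)) (hr : r ≤ r') :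
    (l, r') ∈ minkSum fun i => epiConj L (f i) := by
  have := add_mem_minkSum h ⟨0, hm⟩ (b := (0, r' - r)) fun c hc => by
    rw [show c + (0, r' - r) = (c.1, c.2 + (r' - r)) from Prod.ext (add_zero _) rfl]
    exact mk_mem_epiConj_of_le hc (le_add_of_nonneg_right (sub_nonneg.2 hr))
  simpa using this

end SumRule

theorem stmt16_general (L : Set (X → ℝ))
    (m : ℕ) (hm : 2 ≤ m) (f : Fin m → X → EReal) (hf : ∀ i y, f i y ≠ ⊥)
    (hepi : closure (minkSum fun i => epiConj L (f i)) ∩ {p : (X → ℝ) × ℝ | p.1 ∈ L}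
      = epiConj L (fun x => ∑ i, f i x)) :
    ∀ x : X, (∀ i, f i x < ⊤) → ∀ ε : ℝ, 0 ≤ ε →
      subdiff L (fun y => ∑ i, f i y) ε x =
        ⋂ (η : ℝ) (_ : 0 < η),
          (closure (⋃ (e : Fin m → ℝ) (_ : ∀ i, 0 ≤ e i) (_ : ∑ i, e i = ε + η),
            minkSum fun i => subdiff L (f i) (e i) x) ∩ L) := by
  intro x hx ε _
  obtain ⟨a, ha⟩ : ∃ a : Fin m → ℝ, ∀ i, f i x = a i :=
    ⟨fun i => (f i x).toReal, fun i => (EReal.coe_toReal (hx i).ne (hf i x)).symm⟩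
  have hsum : ∑ i, f i x = ((∑ i, a i : ℝ) : EReal) := by
    simp only [ha, EReal.coe_finset_sum]
  have hclosure := mk_mem_closure_iff_forall_pos_mem_closure
    (fun _ _ _ => mk_mem_minkSum_epiConj_of_le (L := L) (f := f) (by omega))
    (ψ := fun l => l x - ∑ i, a i + ε) (by fun_prop)
  ext l
  simp only [mem_iInter₂, mem_inter_iff, iUnion_minkSum_subdiff_eq ha,
    mem_subdiff_iff_mem_epiConj (f := fun y => ∑ i, f i y) hsum, ← hepi, mem_ofPred_eq,
    ← add_assoc, hclosure]
  exact ⟨fun ⟨h, hl⟩ η hη => ⟨h η hη, hl⟩, fun h => ⟨fun η hη => (h η hη).1, (h 1 one_pos).2⟩⟩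

/-- sum rule under epigraph additivity: if the closure (in `𝓛 × ℝ`)
of the Minkowski sum of the epigraphs of the conjugates equals the epigraph of the
conjugate of the sum, then the sum rule with closures holds at every common domain
point and every `ε ≥ 0`. -/
theorem stmt16 [Nonempty X] (L : Set (X → ℝ)) (hL : IsLinSpace L)
    (m : ℕ) (hm : 2 ≤ m) (f : Fin m → X → EReal) (hf : ∀ i y, f i y ≠ ⊥)
    (hdom : ∃ x, ∀ i, f i x < ⊤)
    (hepi : closure (minkSum fun i => epiConj L (f i)) ∩ {p : (X → ℝ) × ℝ | p.1 ∈ L}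
      = epiConj L (fun x => ∑ i, f i x)) :
    ∀ x : X, (∀ i, f i x < ⊤) → ∀ ε : ℝ, 0 ≤ ε →
      subdiff L (fun y => ∑ i, f i y) ε x =
        ⋂ (η : ℝ) (_ : 0 < η),
          (closure (⋃ (e : Fin m → ℝ) (_ : ∀ i, 0 ≤ e i) (_ : ∑ i, e i = ε + η),
            minkSum fun i => subdiff L (f i) (e i) x) ∩ L) :=
  stmt16_general L m hm f hf hepi
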